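/- Let U be the n×n matrix over R with entries U_{a,b} = ν_{n−1+a−b} for 1 ≤ a, b ≤ n (where ν₀ = ν₁ = 0), and let 𝔻ₙ := det U. Then for every integer j ≥ 2 there exists an integer m ≥ 0 such that 𝔻ₙ^m · ν_j belongs to the ℂ-subalgebra of R generated by ν₂, ν₃, …, ν_{2n−1}. -/

import Mathlib

open MvPolynomial Finset

noncomputable section

def Zv (n : ℕ) (j : Fin n) : MvPolynomial (Fin n ⊕ Fin n) ℂ := X (Sum.inl j)

def Wv (n : ℕ) (j : Fin n) : MvPolynomial (Fin n ⊕ Fin n) ℂ := X (Sum.inr j)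

/-- The `k`-th normalized harmonic moment (with `ν₀ = ν₁ = 0`). -/
def nu (n : ℕ) [NeZero n] (k : ℕ) : MvPolynomial (Fin n ⊕ Fin n) ℂ :=
  C (Complex.I / 4) *
    ∑ j : Fin n, (Wv n j - Wv n (j + 1)) *
      ∑ m ∈ Finset.range k, Zv n j ^ (k - 1 - m) * Zv n (j + 1) ^ m

/-- The Toeplitz matrix `U` with `U_{a,b} = ν_{n−1+a−b}` (indices `0`-based here,
which agrees with the `1`-based description since only `a − b` matters). -/
def Umatrix (n : ℕ) [NeZero n] : Matrix (Fin n) (Fin n) (MvPolynomial (Fin n ⊕ Fin n) ℂ) :=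
  fun a b => nu n (n - 1 + (a : ℕ) - (b : ℕ))

namespace Statement7Aux

variable (n : ℕ) [NeZero n]

/-- The edge sum appearing in `nu`. -/
def Sedge (k : ℕ) (j : Fin n) : MvPolynomial (Fin n ⊕ Fin n) ℂ :=
  ∑ m ∈ Finset.range k, Zv n j ^ (k - 1 - m) * Zv n (j + 1) ^ m

lemma nu_def (k : ℕ) :
    nu n k = C (Complex.I / 4) * ∑ j : Fin n, (Wv n j - Wv n (j + 1)) * Sedge n k j := rfl

/-- The characteristic polynomial `∏ (t - z_l)`. -/
def Pchar : Polynomial (MvPolynomial (Fin n ⊕ Fin n) ℂ) :=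
  ∏ l : Fin n, (Polynomial.X - Polynomial.C (Zv n l))

lemma Pchar_monic : (Pchar n).Monic :=
  Polynomial.monic_prod_of_monic _ _ fun l _ => Polynomial.monic_X_sub_C _

lemma Pchar_natDegree : (Pchar n).natDegree = n := by
  rw [Pchar, Polynomial.natDegree_prod]
  · simp
  · intro l _
    exact (Polynomial.monic_X_sub_C _).ne_zero

lemma Pchar_eval (l : Fin n) : (Pchar n).eval (Zv n l) = 0 := by
  rw [Pchar, Polynomial.eval_prod]
  exact Finset.prod_eq_zero (Finset.mem_univ l) (by simp)

lemma geom (k : ℕ) (j : Fin n) :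
    Sedge n k j * (Zv n (j + 1) - Zv n j) = Zv n (j + 1) ^ k - Zv n j ^ k := by
  have := geom_sum₂_mul (Zv n (j + 1)) (Zv n j) k
  rw [← this, Sedge]
  refine congrArg (fun s => s * _) ?_
  refine Finset.sum_congr rfl fun m hm => mul_comm _ _

lemma Zsub_ne (hn : 3 ≤ n) (j : Fin n) : Zv n (j + 1) - Zv n j ≠ 0 := by
  intro h
  have h1 : Zv n (j + 1) = Zv n j := by linear_combination h
  have h2 : (Sum.inl (j + 1) : Fin n ⊕ Fin n) = Sum.inl j :=
    MvPolynomial.X_injective h1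
  have h3 : j + 1 = j := Sum.inl.inj h2
  have h4 : (1 : Fin n) = 0 := by
    have := congrArg (fun x => x - j) h3
    simpa [add_sub_cancel_right] using this
  rw [Fin.one_eq_zero_iff] at h4
  omega

/-- Per-edge linear recurrence. -/
lemma edge_rec (hn : 3 ≤ n) (k : ℕ) (hk : n ≤ k) (j : Fin n) :
    ∑ i ∈ Finset.range (n + 1), (Pchar n).coeff i * Sedge n (k - n + i) j = 0 := by
  apply mul_right_cancel₀ (Zsub_ne n hn j)
  rw [zero_mul, Finset.sum_mul]
  have : ∀ i ∈ Finset.range (n + 1),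
      (Pchar n).coeff i * Sedge n (k - n + i) j * (Zv n (j + 1) - Zv n j)
        = (Pchar n).coeff i *
            (Zv n (j + 1) ^ (k - n) * Zv n (j + 1) ^ i - Zv n j ^ (k - n) * Zv n j ^ i) := by
    intro i _
    rw [mul_assoc, geom, pow_add, pow_add]
  rw [Finset.sum_congr rfl this]
  have he : ∀ x : MvPolynomial (Fin n ⊕ Fin n) ℂ,
      (Pchar n).eval x = ∑ i ∈ Finset.range (n + 1), (Pchar n).coeff i * x ^ i := by
    intro x
    have := Polynomial.eval_eq_sum_range (p := Pchar n) x
    rwa [Pchar_natDegree] at this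
  have : ∑ i ∈ Finset.range (n + 1),
      (Pchar n).coeff i *
        (Zv n (j + 1) ^ (k - n) * Zv n (j + 1) ^ i - Zv n j ^ (k - n) * Zv n j ^ i)
      = Zv n (j + 1) ^ (k - n) * (Pchar n).eval (Zv n (j + 1))
        - Zv n j ^ (k - n) * (Pchar n).eval (Zv n j) := by
    rw [he, he, Finset.mul_sum, Finset.mul_sum, ← Finset.sum_sub_distrib]
    refine Finset.sum_congr rfl fun i _ => by ring
  rw [this, Pchar_eval, Pchar_eval, mul_zero, mul_zero, sub_zero]

/-- The linear recurrence for the moments. -/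
lemma nu_rec (hn : 3 ≤ n) (k : ℕ) (hk : n ≤ k) :
    ∑ i ∈ Finset.range (n + 1), (Pchar n).coeff i * nu n (k - n + i) = 0 := by
  have h1 := edge_rec n hn k hk
  calc ∑ i ∈ Finset.range (n + 1), (Pchar n).coeff i * nu n (k - n + i)
      = ∑ i ∈ Finset.range (n + 1), ∑ j : Fin n,
          C (Complex.I / 4) * ((Wv n j - Wv n (j + 1)) *
            ((Pchar n).coeff i * Sedge n (k - n + i) j)) := by
        refine Finset.sum_congr rfl fun i _ => ?_
        rw [nu_def, Finset.mul_sum, Finset.mul_sum]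
        refine Finset.sum_congr rfl fun j _ => by ring
    _ = ∑ j : Fin n, C (Complex.I / 4) * ((Wv n j - Wv n (j + 1)) *
          ∑ i ∈ Finset.range (n + 1), (Pchar n).coeff i * Sedge n (k - n + i) j) := by
        rw [Finset.sum_comm]
        refine Finset.sum_congr rfl fun j _ => ?_
        rw [Finset.mul_sum, Finset.mul_sum]
    _ = 0 := by
        refine Finset.sum_eq_zero fun j _ => ?_
        rw [h1 j, mul_zero, mul_zero]

lemma nu_zero : nu n 0 = 0 := by simp [nu]

lemma nu_one : nu n 1 = 0 := by
  have h : ∑ j : Fin n, (Wv n j - Wv n (j + 1)) = 0 := by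
    rw [Finset.sum_sub_distrib]
    have : ∑ j : Fin n, Wv n (j + 1) = ∑ j : Fin n, Wv n j :=
      Fintype.sum_equiv (Equiv.addRight (1 : Fin n)) _ _ fun j => rfl
    rw [this, sub_self]
  simp only [nu, Finset.range_one, Finset.sum_singleton]
  simp [h]

/-- The target subalgebra. -/
def A : Subalgebra ℂ (MvPolynomial (Fin n ⊕ Fin n) ℂ) :=
  Algebra.adjoin ℂ {x : MvPolynomial (Fin n ⊕ Fin n) ℂ |
    ∃ k, 2 ≤ k ∧ k ≤ 2 * n - 1 ∧ x = nu n k}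

lemma nu_mem {l : ℕ} (hl : l ≤ 2 * n - 1) : nu n l ∈ A n := by
  match l with
  | 0 => rw [nu_zero]; exact zero_mem _
  | 1 => rw [nu_one]; exact zero_mem _
  | (m + 2) => exact Algebra.subset_adjoin ⟨m + 2, by omega, hl, rfl⟩

lemma Umatrix_mem (a b : Fin n) : Umatrix n a b ∈ A n := by
  have ha : (a : ℕ) < n := a.isLt
  exact nu_mem n (by omega)

/-- The matrix `U` with entries in the subalgebra. -/
def U' : Matrix (Fin n) (Fin n) (A n) := fun a b => ⟨Umatrix n a b, Umatrix_mem n a b⟩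

lemma U'_map : (U' n).map (A n).val = Umatrix n := by
  ext a b; rfl

lemma mapMatrix_U' : (A n).val.toRingHom.mapMatrix (U' n) = Umatrix n := by
  ext a b; rfl

lemma det_mem : (Umatrix n).det ∈ A n := by
  have h := RingHom.map_det (A n).val.toRingHom (U' n)
  rw [mapMatrix_U'] at h
  rw [← h]
  exact SetLike.coe_mem _

lemma adjugate_mem (a b : Fin n) : (Umatrix n).adjugate a b ∈ A n := by
  have h := RingHom.map_adjugate (A n).val.toRingHom (U' n)
  rw [mapMatrix_U'] at h
  rw [← h]
  exact SetLike.coe_mem _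

/-- The coefficient vector. -/
def xvec : Fin n → MvPolynomial (Fin n ⊕ Fin n) ℂ :=
  fun b => -((Pchar n).coeff (n - 1 - (b : ℕ)))

lemma nu_rec' (hn : 3 ≤ n) (k : ℕ) (hk : n ≤ k) :
    nu n k = ∑ i ∈ Finset.range n, (-(Pchar n).coeff i) * nu n (k - n + i) := by
  have h := nu_rec n hn k hk
  rw [Finset.sum_range_succ] at h
  have hc : (Pchar n).coeff n = 1 := by
    have := (Pchar_monic n).coeff_natDegree
    rwa [Pchar_natDegree] at this
  have hkn : k - n + n = k := by omega
  rw [hc, one_mul, hkn] at h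
  have h2 : nu n k = -∑ i ∈ Finset.range n, (Pchar n).coeff i * nu n (k - n + i) := by
    linear_combination h
  rw [h2, ← Finset.sum_neg_distrib]
  exact Finset.sum_congr rfl fun i _ => (neg_mul _ _).symm

lemma mulVec_eq (hn : 3 ≤ n) :
    (Umatrix n).mulVec (xvec n) = fun a : Fin n => nu n (n + (a : ℕ)) := by
  funext a
  have ha : (a : ℕ) < n := a.isLt
  have key : ∀ b : Fin n,
      Umatrix n a b * xvec n b
        = (fun i : Fin n => (-(Pchar n).coeff (i : ℕ)) * nu n ((a : ℕ) + (i : ℕ))) (Fin.rev b) := by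
    intro b
    have hb : (b : ℕ) < n := b.isLt
    have h1 : ((Fin.rev b : Fin n) : ℕ) = n - 1 - (b : ℕ) := by rw [Fin.val_rev]; omega
    simp only [Umatrix, xvec, h1]
    have e1 : n - 1 + (a : ℕ) - (b : ℕ) = (a : ℕ) + (n - 1 - (b : ℕ)) := by omega
    rw [e1, mul_comm]
  calc (Umatrix n).mulVec (xvec n) a
      = ∑ b : Fin n, Umatrix n a b * xvec n b := rfl
    _ = ∑ b : Fin n, (fun i : Fin n => (-(Pchar n).coeff (i : ℕ)) * nu n ((a : ℕ) + (i : ℕ)))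
          (Fin.rev b) := Finset.sum_congr rfl fun b _ => key b
    _ = ∑ i : Fin n, (-(Pchar n).coeff (i : ℕ)) * nu n ((a : ℕ) + (i : ℕ)) :=
        Fintype.sum_equiv Fin.revPerm _ _ (fun b => rfl)
    _ = ∑ i ∈ Finset.range n, (-(Pchar n).coeff i) * nu n ((a : ℕ) + i) := by
        rw [Fin.sum_univ_eq_sum_range (fun i => (-(Pchar n).coeff i) * nu n ((a : ℕ) + i))]
    _ = nu n (n + (a : ℕ)) := by
        rw [nu_rec' n hn (n + (a : ℕ)) (by omega)]
        refine Finset.sum_congr rfl fun i hi => ?_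
        congr 2
        omega

lemma det_smul_xvec (hn : 3 ≤ n) (b : Fin n) :
    (Umatrix n).det * xvec n b ∈ A n := by
  have h : (Umatrix n).adjugate.mulVec ((Umatrix n).mulVec (xvec n))
      = (Umatrix n).det • xvec n := by
    rw [Matrix.mulVec_mulVec, Matrix.adjugate_mul, Matrix.smul_mulVec,
      Matrix.one_mulVec]
  have h2 : (Umatrix n).det * xvec n b
      = ∑ a : Fin n, (Umatrix n).adjugate b a * nu n (n + (a : ℕ)) := by
    have := congrFun h b
    rw [mulVec_eq n hn] at this
    simpa [Matrix.mulVec, dotProduct, Pi.smul_apply, smul_eq_mul] using this.symm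
  rw [h2]
  exact Subalgebra.sum_mem _ fun a _ =>
    mul_mem (adjugate_mem n b a) (nu_mem n (by have := a.isLt; omega))

lemma det_mul_coeff (hn : 3 ≤ n) (i : ℕ) (hi : i < n) :
    (Umatrix n).det * (Pchar n).coeff i ∈ A n := by
  have hb : ((Fin.rev ⟨i, hi⟩ : Fin n) : ℕ) = n - 1 - i := by
    rw [Fin.val_rev]; simp; omega
  have h := det_smul_xvec n hn (Fin.rev ⟨i, hi⟩)
  rw [xvec, hb] at h
  have e : n - 1 - (n - 1 - i) = i := by omega
  rw [e] at h
  have : (Umatrix n).det * (Pchar n).coeff i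
      = -((Umatrix n).det * -(Pchar n).coeff i) := by ring
  rw [this]
  exact neg_mem h

end Statement7Aux

open Statement7Aux in
/-- With `𝔻ₙ = det U`, every moment `ν_j` becomes, after multiplication by a suitable
power of `𝔻ₙ`, a polynomial in `ν₂, …, ν_{2n−1}`. -/
theorem statement7 (n : ℕ) [NeZero n] (hn : 3 ≤ n) (j : ℕ) (hj : 2 ≤ j) :
    ∃ m : ℕ, (Umatrix n).det ^ m * nu n j ∈
      Algebra.adjoin ℂ {x : MvPolynomial (Fin n ⊕ Fin n) ℂ |
        ∃ k, 2 ≤ k ∧ k ≤ 2 * n - 1 ∧ x = nu n k} := by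
  show ∃ m : ℕ, (Umatrix n).det ^ m * nu n j ∈ A n
  clear hj
  induction j using Nat.strong_induction_on with
  | _ j ih =>
    rcases le_or_gt j (2 * n - 1) with h | h
    · exact ⟨0, by simpa using nu_mem n h⟩
    · have hk : n ≤ j := by omega
      have hrec := nu_rec' n hn j hk
      have hIH : ∀ i : Fin n, ∃ m : ℕ, (Umatrix n).det ^ m * nu n (j - n + (i : ℕ)) ∈ A n :=
        fun i => ih (j - n + (i : ℕ)) (by have := i.isLt; omega)
      choose m hm using hIH
      set M := Finset.univ.sup m with hM
      refine ⟨M + 1, ?_⟩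
      have : (Umatrix n).det ^ (M + 1) * nu n j
          = ∑ i : Fin n,
              ((Umatrix n).det * (-(Pchar n).coeff (i : ℕ))) *
                ((Umatrix n).det ^ (M - m i) *
                  ((Umatrix n).det ^ (m i) * nu n (j - n + (i : ℕ)))) := by
        rw [hrec]
        rw [← Fin.sum_univ_eq_sum_range (fun i => (-(Pchar n).coeff i) * nu n (j - n + i))]
        rw [Finset.mul_sum]
        refine Finset.sum_congr rfl fun i _ => ?_
        have hmi : m i ≤ M := Finset.le_sup (Finset.mem_univ i)
        have : (Umatrix n).det ^ (M + 1)
            = (Umatrix n).det * ((Umatrix n).det ^ (M - m i) * (Umatrix n).det ^ (m i)) := by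
          rw [← pow_add, ← pow_succ']
          congr 1
          omega
        rw [this]
        ring
      rw [this]
      refine Subalgebra.sum_mem _ fun i _ => ?_
      refine mul_mem ?_ (mul_mem (pow_mem (det_mem n) _) (hm i))
      have : (Umatrix n).det * (-(Pchar n).coeff (i : ℕ))
          = -((Umatrix n).det * (Pchar n).coeff (i : ℕ)) := by ring
      rw [this]
      exact neg_mem (det_mul_coeff n hn (i : ℕ) i.isLt)
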